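/- Theorem 1 (nonparametric identification): under the outcome model, the treatment model, IV independence, and the orthogonality conditions (Assumption 2(c), unconditional form), the vector x* = (E[ϑ_a(V)], E[ϑ_z(V)], E[ϑ_az(V)]) ∈ ℝ³ satisfies the linear system M·x = c, where the 3×3 matrix M has rows (E[(B−E[B])(A−E[A|B])A], 0, E[B(B−E[B])(A−E[A|B])A]), (E[A(B−E[B])], E[B(B−E[B])], E[AB(B−E[B])]), and (Cov(B(B−E[B]), A(A−E[A|B])), 0, Cov(B(B−E[B]), AB(A−E[A|B]))), and c = (E[(B−E[B])(A−E[A|B])Y], E[(B−E[B])Y], Cov(B(B−E[B]), (A−E[A|B])Y)). Consequently, if M is invertible, then x* is the unique solution of this system, i.e. every x ∈ ℝ³ with M·x = c equals x* (the causal contrasts E[ϑ_a(V)], E[ϑ_z(V)], E[ϑ_az(V)] are identified from the joint distribution of (Y, A, B)). -/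

import Mathlib

/-!
Because the treatment is binary, every function of `(A, B)` is `g(0,B) + A·(g(1,B) - g(0,B))`.
Conditioning `A` on `(B, V)` and using `B ⟂ V`, the covariance of such a function with any `q(V)`
is therefore a combination of `Cov(q, αz)` and `Cov(q, αu)`. After conditioning `Y` on `(V, A, B)`,
the orthogonality assumptions let `ϑa`, `ϑz`, `ϑaz` factor out of `E[h(A,B)·Y]` as their means,
leaving only a `ϑu`-term. Weighting by the residual `A - E[A|B] = A - E[αz]·B - E[αu]` removes the
`ϑz`-term and turns the `ϑu`-term into `E[w(B)]·Cov(ϑu, αu)`; this term vanishes for the centred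
weight `B - E[B]` and cancels in a covariance. These are the three rows of `M·x* = c`.
-/

open MeasureTheory ProbabilityTheory

/-- Covariance of two real random variables: `Cov(X,Z) = E[XZ] - E[X]·E[Z]`. -/
noncomputable def covE {Ω : Type*} [MeasurableSpace Ω] (μ : Measure Ω) (X Z : Ω → ℝ) : ℝ :=
  (∫ ω, X ω * Z ω ∂μ) - (∫ ω, X ω ∂μ) * (∫ ω, Z ω ∂μ)

open scoped ENNReal

section Bounded

variable {Ω α : Type*} {mΩ : MeasurableSpace Ω} {μ : Measure Ω}
  [MeasurableSpace α] {X : Ω → α}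

lemma memLp_top_comp_of_mem_finset (hX : Measurable X) {s : Finset α}
    (hXs : ∀ ω, X ω ∈ s) {g : α → ℝ} (hg : Measurable g) : MemLp (fun ω => g (X ω)) ∞ μ :=
  memLp_top_of_bound (hg.comp hX).aestronglyMeasurable (∑ x ∈ s, |g x|)
    (ae_of_all _ fun ω => Finset.single_le_sum (fun x _ => abs_nonneg (g x)) (hXs ω))

lemma MeasureTheory.MemLp.mul_top {f g : Ω → ℝ} (hf : MemLp f ∞ μ) (hg : MemLp g ∞ μ) :
    MemLp (fun ω => f ω * g ω) ∞ μ :=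
  hg.mul' hf

lemma integral_mul_eq_integral_mul_of_condExp_ae_eq [IsFiniteMeasure μ] {m : MeasurableSpace Ω}
    (hm : m ≤ mΩ) {f g h : Ω → ℝ} (hf : StronglyMeasurable[m] f) (hf_top : MemLp f ∞ μ)
    (hg : Integrable g μ) (hgh : μ[g|m] =ᵐ[μ] h) :
    ∫ ω, f ω * g ω ∂μ = ∫ ω, f ω * h ω ∂μ := by
  have hfg : Integrable (f * g) μ :=
    ((memLp_one_iff_integrable.2 hg).mul hf_top).integrable le_rfl
  calc ∫ ω, f ω * g ω ∂μ = ∫ ω, (μ[f * g|m]) ω ∂μ := (integral_condExp hm).symm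
    _ = ∫ ω, f ω * h ω ∂μ := integral_congr_ae <| by
      filter_upwards [condExp_mul_of_stronglyMeasurable_left hf hfg hg, hgh] with ω h₁ h₂
      rw [h₁, Pi.mul_apply, h₂]

end Bounded

lemma covE_comm {Ω : Type*} [MeasurableSpace Ω] (μ : Measure Ω) (X Z : Ω → ℝ) :
    covE μ X Z = covE μ Z X := by
  simp only [covE, mul_comm (X _), mul_comm (∫ ω, X ω ∂μ)]

section Model

variable {Ω 𝒱 : Type*} {mΩ : MeasurableSpace Ω} [MeasurableSpace 𝒱]

structure IVTreatmentModel (μ : Measure Ω) (V : Ω → 𝒱) (A B : Ω → ℝ) (αz αu : 𝒱 → ℝ) :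
    Prop where
  measurable_V : Measurable V
  measurable_A : Measurable A
  measurable_B : Measurable B
  binary_A : ∀ ω, A ω = 0 ∨ A ω = 1
  binary_B : ∀ ω, B ω = 0 ∨ B ω = 1
  measurable_αz : Measurable αz
  measurable_αu : Measurable αu
  bounded_αz : ∃ C, ∀ x, |αz x| ≤ C
  bounded_αu : ∃ C, ∀ x, |αu x| ≤ C
  condExp_A : μ[A | MeasurableSpace.comap (fun ω => (B ω, V ω)) inferInstance]
    =ᵐ[μ] fun ω => αz (V ω) * B ω + αu (V ω)
  indepFun_B_V : IndepFun B V μ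

namespace IVTreatmentModel

variable {μ : Measure Ω} {V : Ω → 𝒱} {A B : Ω → ℝ} {αz αu : 𝒱 → ℝ}
  {w : ℝ → ℝ} {g : ℝ × ℝ → ℝ} {q : 𝒱 → ℝ}

lemma integral_comp_mul_comp (hT : IVTreatmentModel μ V A B αz αu) (hw : Measurable w)
    (hq : Measurable q) :
    ∫ ω, w (B ω) * q (V ω) ∂μ = (∫ ω, w (B ω) ∂μ) * ∫ ω, q (V ω) ∂μ :=
  hT.indepFun_B_V.integral_comp_mul_comp hT.measurable_B.aemeasurable
    hT.measurable_V.aemeasurable hw.aestronglyMeasurable hq.aestronglyMeasurable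

lemma memLp_comp_AB (hT : IVTreatmentModel μ V A B αz αu) (hg : Measurable g) :
    MemLp (fun ω => g (A ω, B ω)) ∞ μ :=
  memLp_top_comp_of_mem_finset (s := {0, 1} ×ˢ {0, 1})
    (hT.measurable_A.prodMk hT.measurable_B)
    (fun ω => by simpa [Finset.mem_product] using ⟨hT.binary_A ω, hT.binary_B ω⟩) hg

lemma memLp_comp_B (hT : IVTreatmentModel μ V A B αz αu) (hw : Measurable w) :
    MemLp (fun ω => w (B ω)) ∞ μ :=
  hT.memLp_comp_AB (g := fun p => w p.2) (hw.comp measurable_snd)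

lemma memLp_A (hT : IVTreatmentModel μ V A B αz αu) : MemLp A ∞ μ :=
  hT.memLp_comp_AB (g := Prod.fst) measurable_fst

lemma memLp_comp_V (hT : IVTreatmentModel μ V A B αz αu) (hq : Measurable q)
    (hqb : ∃ C, ∀ x, |q x| ≤ C) : MemLp (fun ω => q (V ω)) ∞ μ := by
  obtain ⟨C, hC⟩ := hqb
  exact memLp_top_of_bound (hq.comp hT.measurable_V).aestronglyMeasurable C
    (ae_of_all _ fun ω => hC (V ω))

variable [IsProbabilityMeasure μ]

lemma integrable_comp_AB_mul_comp_V (hT : IVTreatmentModel μ V A B αz αu) (hg : Measurable g)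
    (hq : Measurable q) (hqb : ∃ C, ∀ x, |q x| ≤ C) :
    Integrable (fun ω => g (A ω, B ω) * q (V ω)) μ :=
  ((hT.memLp_comp_AB hg).mul_top (hT.memLp_comp_V hq hqb)).integrable le_top

lemma integral_comp_mul_comp_mul_A (hT : IVTreatmentModel μ V A B αz αu) (hw : Measurable w)
    (hq : Measurable q) (hqb : ∃ C, ∀ x, |q x| ≤ C) :
    ∫ ω, w (B ω) * q (V ω) * A ω ∂μ
      = (∫ ω, w (B ω) * B ω ∂μ) * (∫ ω, q (V ω) * αz (V ω) ∂μ)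
        + (∫ ω, w (B ω) ∂μ) * ∫ ω, q (V ω) * αu (V ω) ∂μ := by
  have hwq : StronglyMeasurable[MeasurableSpace.comap (fun ω => (B ω, V ω)) inferInstance]
      (fun ω => w (B ω) * q (V ω)) :=
    (((hw.comp measurable_fst).mul (hq.comp measurable_snd)).comp
      (comap_measurable _)).stronglyMeasurable
  have hαz := hT.memLp_comp_V hT.measurable_αz hT.bounded_αz
  have hαu := hT.memLp_comp_V hT.measurable_αu hT.bounded_αu
  have hqV := hT.memLp_comp_V hq hqb
  rw [integral_mul_eq_integral_mul_of_condExp_ae_eq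
      (hT.measurable_B.prodMk hT.measurable_V).comap_le hwq ((hT.memLp_comp_B hw).mul_top hqV)
      (hT.memLp_A.integrable le_top) hT.condExp_A,
    ← hT.integral_comp_mul_comp (w := fun b => w b * b) (q := fun v => q v * αz v)
      (hw.mul measurable_id) (hq.mul hT.measurable_αz),
    ← hT.integral_comp_mul_comp (q := fun v => q v * αu v) hw (hq.mul hT.measurable_αu),
    ← integral_add]
  · exact integral_congr_ae (ae_of_all _ fun ω => by ring)
  · exact ((hT.memLp_comp_B (w := fun b => w b * b) (hw.mul measurable_id)).mul_top
      (hqV.mul_top hαz)).integrable le_top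
  · exact ((hT.memLp_comp_B hw).mul_top (hqV.mul_top hαu)).integrable le_top

lemma condExp_A_comap_B (hT : IVTreatmentModel μ V A B αz αu) :
    μ[A|MeasurableSpace.comap B inferInstance]
      =ᵐ[μ] fun ω => (∫ x, αz (V x) ∂μ) * B ω + ∫ x, αu (V x) ∂μ := by
  have hBV : MeasurableSpace.comap (fun ω => (B ω, V ω)) inferInstance ≤ mΩ :=
    (hT.measurable_B.prodMk hT.measurable_V).comap_le
  have hB_le : MeasurableSpace.comap B inferInstance
      ≤ MeasurableSpace.comap (fun ω => (B ω, V ω)) inferInstance :=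
    (measurable_fst.comp (comap_measurable (fun ω => (B ω, V ω))) :
      Measurable[MeasurableSpace.comap (fun ω => (B ω, V ω)) inferInstance] B).comap_le
  have hB_sm : StronglyMeasurable[MeasurableSpace.comap B inferInstance] B :=
    (comap_measurable B).stronglyMeasurable
  have condExp_V {r : 𝒱 → ℝ} (hr : Measurable r) :
      μ[fun ω => r (V ω)|MeasurableSpace.comap B inferInstance] =ᵐ[μ] fun _ => ∫ x, r (V x) ∂μ :=
    condExp_indep_eq hT.measurable_V.comap_le hT.measurable_B.comap_le
      (hr.comp (comap_measurable V)).stronglyMeasurable hT.indepFun_B_V.symm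
  have hαz_top := hT.memLp_comp_V hT.measurable_αz hT.bounded_αz
  have hαz := hαz_top.integrable le_top
  have hαu := (hT.memLp_comp_V hT.measurable_αu hT.bounded_αu).integrable le_top
  have hBαz : Integrable (fun ω => B ω * αz (V ω)) μ :=
    ((hT.memLp_comp_B measurable_id).mul_top hαz_top).integrable le_top
  calc μ[A|MeasurableSpace.comap B inferInstance]
      =ᵐ[μ] μ[fun ω => B ω * αz (V ω) + αu (V ω)|MeasurableSpace.comap B inferInstance] :=
        (condExp_condExp_of_le hB_le hBV).symm.trans <| condExp_congr_ae <|
          hT.condExp_A.mono fun ω h => h.trans (by ring)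
    _ =ᵐ[μ] B * μ[fun ω => αz (V ω)|MeasurableSpace.comap B inferInstance]
        + μ[fun ω => αu (V ω)|MeasurableSpace.comap B inferInstance] :=
        (condExp_add hBαz hαu _).trans <|
          (condExp_mul_of_stronglyMeasurable_left hB_sm hBαz hαz).add (ae_eq_refl _)
    _ =ᵐ[μ] fun ω => (∫ x, αz (V x) ∂μ) * B ω + ∫ x, αu (V x) ∂μ := by
        filter_upwards [condExp_V hT.measurable_αz, condExp_V hT.measurable_αu] with ω hz hu
        simp only [Pi.add_apply, Pi.mul_apply, hz, hu, mul_comm]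

lemma integral_comp_mul_residual_eq_zero (hT : IVTreatmentModel μ V A B αz αu)
    (hw : Measurable w) :
    ∫ ω, w (B ω) * (A ω - ((∫ x, αz (V x) ∂μ) * B ω + ∫ x, αu (V x) ∂μ)) ∂μ = 0 := by
  have hw_sm : StronglyMeasurable[MeasurableSpace.comap B inferInstance] fun ω => w (B ω) :=
    (hw.comp (comap_measurable B)).stronglyMeasurable
  simp only [mul_sub]
  rw [integral_sub, integral_mul_eq_integral_mul_of_condExp_ae_eq hT.measurable_B.comap_le
    hw_sm (hT.memLp_comp_B hw) (hT.memLp_A.integrable le_top) hT.condExp_A_comap_B, sub_self]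
  · exact ((hT.memLp_comp_B hw).mul_top hT.memLp_A).integrable le_top
  · exact ((hT.memLp_comp_B hw).mul_top
      (hT.memLp_comp_B (w := fun b => (∫ x, αz (V x) ∂μ) * b + ∫ x, αu (V x) ∂μ)
        (by fun_prop))).integrable le_top

lemma integral_comp_AB_mul_comp_V (hT : IVTreatmentModel μ V A B αz αu) (hg : Measurable g)
    (hq : Measurable q) (hqb : ∃ C, ∀ x, |q x| ≤ C) :
    ∫ ω, g (A ω, B ω) * q (V ω) ∂μ
      = (∫ ω, g (0, B ω) ∂μ) * (∫ ω, q (V ω) ∂μ)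
        + (∫ ω, (g (1, B ω) - g (0, B ω)) * B ω ∂μ) * (∫ ω, q (V ω) * αz (V ω) ∂μ)
        + (∫ ω, g (1, B ω) - g (0, B ω) ∂μ) * ∫ ω, q (V ω) * αu (V ω) ∂μ := by
  have hg₀ : Measurable fun b => g (0, b) := by fun_prop
  have hg₁ : Measurable fun b => g (1, b) - g (0, b) := by fun_prop
  have h_split (ω : Ω) : g (A ω, B ω) * q (V ω)
      = g (0, B ω) * q (V ω) + (g (1, B ω) - g (0, B ω)) * q (V ω) * A ω := by
    rcases hT.binary_A ω with h | h <;> rw [h] <;> ring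
  rw [integral_congr_ae (ae_of_all _ h_split), integral_add, hT.integral_comp_mul_comp hg₀ hq,
    hT.integral_comp_mul_comp_mul_A hg₁ hq hqb, add_assoc]
  · exact ((hT.memLp_comp_B hg₀).mul_top (hT.memLp_comp_V hq hqb)).integrable le_top
  · exact (((hT.memLp_comp_B hg₁).mul_top (hT.memLp_comp_V hq hqb)).mul_top
      hT.memLp_A).integrable le_top

lemma covE_comp_AB_comp_V (hT : IVTreatmentModel μ V A B αz αu) (hg : Measurable g)
    (hq : Measurable q) (hqb : ∃ C, ∀ x, |q x| ≤ C) :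
    covE μ (fun ω => g (A ω, B ω)) (fun ω => q (V ω))
      = (∫ ω, (g (1, B ω) - g (0, B ω)) * B ω ∂μ)
          * covE μ (fun ω => q (V ω)) (fun ω => αz (V ω))
        + (∫ ω, g (1, B ω) - g (0, B ω) ∂μ) * covE μ (fun ω => q (V ω)) (fun ω => αu (V ω)) := by
  have hq_int := hT.integral_comp_AB_mul_comp_V hg hq hqb
  have h1_int := hT.integral_comp_AB_mul_comp_V hg (q := fun _ => 1) measurable_const
    ⟨1, fun _ => by simp⟩
  simp only [mul_one, one_mul, integral_const, probReal_univ, smul_eq_mul] at h1_int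
  simp only [covE]
  linear_combination hq_int - (∫ ω, q (V ω) ∂μ) * h1_int

lemma integral_comp_AB_mul_comp_V_of_covE_eq_zero (hT : IVTreatmentModel μ V A B αz αu)
    (hg : Measurable g) (hq : Measurable q) (hqb : ∃ C, ∀ x, |q x| ≤ C)
    (hz : covE μ (fun ω => q (V ω)) (fun ω => αz (V ω)) = 0)
    (hu : covE μ (fun ω => q (V ω)) (fun ω => αu (V ω)) = 0) :
    ∫ ω, g (A ω, B ω) * q (V ω) ∂μ = (∫ ω, g (A ω, B ω) ∂μ) * ∫ ω, q (V ω) ∂μ := by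
  have h := hT.covE_comp_AB_comp_V hg hq hqb
  rwa [hz, hu, mul_zero, mul_zero, add_zero, covE, sub_eq_zero] at h

end IVTreatmentModel

structure LinearOutcomeModel (μ : Measure Ω) (V : Ω → 𝒱) (A B Y : Ω → ℝ)
    (ϑa ϑz ϑaz ϑu : 𝒱 → ℝ) : Prop where
  integrable_Y : Integrable Y μ
  measurable_ϑa : Measurable ϑa
  measurable_ϑz : Measurable ϑz
  measurable_ϑaz : Measurable ϑaz
  measurable_ϑu : Measurable ϑu
  bounded_ϑa : ∃ C, ∀ x, |ϑa x| ≤ C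
  bounded_ϑz : ∃ C, ∀ x, |ϑz x| ≤ C
  bounded_ϑaz : ∃ C, ∀ x, |ϑaz x| ≤ C
  bounded_ϑu : ∃ C, ∀ x, |ϑu x| ≤ C
  condExp_Y : μ[Y | MeasurableSpace.comap (fun ω => (V ω, A ω, B ω)) inferInstance]
    =ᵐ[μ] fun ω => ϑa (V ω) * A ω + ϑz (V ω) * B ω + ϑaz (V ω) * A ω * B ω + ϑu (V ω)

/-- Assumption 2(c) of the paper. -/
structure EffectsUncorrelated (μ : Measure Ω) (V : Ω → 𝒱) (ϑa ϑz ϑaz ϑu αz αu : 𝒱 → ℝ) :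
    Prop where
  ϑa_αz : covE μ (fun x => ϑa (V x)) (fun x => αz (V x)) = 0
  ϑa_αu : covE μ (fun x => ϑa (V x)) (fun x => αu (V x)) = 0
  ϑz_αz : covE μ (fun x => ϑz (V x)) (fun x => αz (V x)) = 0
  ϑz_αu : covE μ (fun x => ϑz (V x)) (fun x => αu (V x)) = 0
  ϑaz_αz : covE μ (fun x => ϑaz (V x)) (fun x => αz (V x)) = 0
  ϑaz_αu : covE μ (fun x => ϑaz (V x)) (fun x => αu (V x)) = 0
  αz_ϑu : covE μ (fun x => αz (V x)) (fun x => ϑu (V x)) = 0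

namespace LinearOutcomeModel

variable {μ : Measure Ω} [IsProbabilityMeasure μ] {V : Ω → 𝒱} {A B Y : Ω → ℝ}
  {αz αu ϑa ϑz ϑaz ϑu : 𝒱 → ℝ} {w : ℝ → ℝ} {h : ℝ × ℝ → ℝ}

lemma integral_comp_AB_mul_Y (hO : LinearOutcomeModel μ V A B Y ϑa ϑz ϑaz ϑu)
    (hT : IVTreatmentModel μ V A B αz αu) (hc : EffectsUncorrelated μ V ϑa ϑz ϑaz ϑu αz αu)
    (hh : Measurable h) :
    ∫ ω, h (A ω, B ω) * Y ω ∂μ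
      = (∫ ω, ϑa (V ω) ∂μ) * (∫ ω, h (A ω, B ω) * A ω ∂μ)
        + (∫ ω, ϑz (V ω) ∂μ) * (∫ ω, h (A ω, B ω) * B ω ∂μ)
        + (∫ ω, ϑaz (V ω) ∂μ) * (∫ ω, h (A ω, B ω) * (A ω * B ω) ∂μ)
        + ∫ ω, h (A ω, B ω) * ϑu (V ω) ∂μ := by
  have hh_sm : StronglyMeasurable[MeasurableSpace.comap (fun ω => (V ω, A ω, B ω)) inferInstance]
      fun ω => h (A ω, B ω) :=
    ((hh.comp measurable_snd).comp (comap_measurable _)).stronglyMeasurable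
  have hhA : Measurable fun p : ℝ × ℝ => h p * p.1 := by fun_prop
  have hhB : Measurable fun p : ℝ × ℝ => h p * p.2 := by fun_prop
  have hhAB : Measurable fun p : ℝ × ℝ => h p * (p.1 * p.2) := by fun_prop
  have ea : ∫ ω, h (A ω, B ω) * A ω * ϑa (V ω) ∂μ
      = (∫ ω, h (A ω, B ω) * A ω ∂μ) * ∫ ω, ϑa (V ω) ∂μ :=
    hT.integral_comp_AB_mul_comp_V_of_covE_eq_zero hhA hO.measurable_ϑa hO.bounded_ϑa
      hc.ϑa_αz hc.ϑa_αu
  have ez : ∫ ω, h (A ω, B ω) * B ω * ϑz (V ω) ∂μ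
      = (∫ ω, h (A ω, B ω) * B ω ∂μ) * ∫ ω, ϑz (V ω) ∂μ :=
    hT.integral_comp_AB_mul_comp_V_of_covE_eq_zero hhB hO.measurable_ϑz hO.bounded_ϑz
      hc.ϑz_αz hc.ϑz_αu
  have eaz : ∫ ω, h (A ω, B ω) * (A ω * B ω) * ϑaz (V ω) ∂μ
      = (∫ ω, h (A ω, B ω) * (A ω * B ω) ∂μ) * ∫ ω, ϑaz (V ω) ∂μ :=
    hT.integral_comp_AB_mul_comp_V_of_covE_eq_zero hhAB hO.measurable_ϑaz hO.bounded_ϑaz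
      hc.ϑaz_αz hc.ϑaz_αu
  calc ∫ ω, h (A ω, B ω) * Y ω ∂μ
      = ∫ ω, h (A ω, B ω) * A ω * ϑa (V ω) + h (A ω, B ω) * B ω * ϑz (V ω)
          + h (A ω, B ω) * (A ω * B ω) * ϑaz (V ω) + h (A ω, B ω) * ϑu (V ω) ∂μ := by
        rw [integral_mul_eq_integral_mul_of_condExp_ae_eq
          (hT.measurable_V.prodMk (hT.measurable_A.prodMk hT.measurable_B)).comap_le hh_sm
          (hT.memLp_comp_AB hh) hO.integrable_Y hO.condExp_Y]
        exact integral_congr_ae (ae_of_all _ fun ω => by ring)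
    _ = _ := by
        have ia : Integrable (fun ω => h (A ω, B ω) * A ω * ϑa (V ω)) μ :=
          hT.integrable_comp_AB_mul_comp_V hhA hO.measurable_ϑa hO.bounded_ϑa
        have iz : Integrable (fun ω => h (A ω, B ω) * B ω * ϑz (V ω)) μ :=
          hT.integrable_comp_AB_mul_comp_V hhB hO.measurable_ϑz hO.bounded_ϑz
        have iaz : Integrable (fun ω => h (A ω, B ω) * (A ω * B ω) * ϑaz (V ω)) μ :=
          hT.integrable_comp_AB_mul_comp_V hhAB hO.measurable_ϑaz hO.bounded_ϑaz
        have iu := hT.integrable_comp_AB_mul_comp_V hh hO.measurable_ϑu hO.bounded_ϑu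
        rw [integral_add, integral_add, integral_add, ea, ez, eaz]
        · ring
        exacts [ia, iz, ia.add iz, iaz, (ia.add iz).add iaz, iu]

lemma integral_comp_mul_residual_mul_Y (hO : LinearOutcomeModel μ V A B Y ϑa ϑz ϑaz ϑu)
    (hT : IVTreatmentModel μ V A B αz αu) (hc : EffectsUncorrelated μ V ϑa ϑz ϑaz ϑu αz αu)
    (hw : Measurable w) :
    ∫ ω, w (B ω) * (A ω - (μ[A|MeasurableSpace.comap B inferInstance]) ω) * Y ω ∂μ
      = (∫ ω, ϑa (V ω) ∂μ)
          * (∫ ω, w (B ω) * (A ω - (μ[A|MeasurableSpace.comap B inferInstance]) ω) * A ω ∂μ)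
        + (∫ ω, ϑaz (V ω) ∂μ) * (∫ ω, w (B ω)
            * (A ω - (μ[A|MeasurableSpace.comap B inferInstance]) ω) * (A ω * B ω) ∂μ)
        + (∫ ω, w (B ω) ∂μ) * covE μ (fun ω => ϑu (V ω)) (fun ω => αu (V ω)) := by
  set a := ∫ x, αz (V x) ∂μ
  set u := ∫ x, αu (V x) ∂μ
  have h_resid (f : Ω → ℝ) :
      ∫ ω, w (B ω) * (A ω - (μ[A|MeasurableSpace.comap B inferInstance]) ω) * f ω ∂μ
        = ∫ ω, w (B ω) * (A ω - (a * B ω + u)) * f ω ∂μ :=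
    integral_congr_ae (hT.condExp_A_comap_B.mono fun ω hω => by dsimp only; rw [hω])
  have hh : Measurable fun p : ℝ × ℝ => w p.2 * (p.1 - (a * p.2 + u)) := by fun_prop
  have h_B : ∫ ω, w (B ω) * (A ω - (a * B ω + u)) * B ω ∂μ = 0 := by
    rw [← hT.integral_comp_mul_residual_eq_zero (w := fun b => w b * b) (by fun_prop)]
    exact integral_congr_ae (ae_of_all _ fun ω => by ring)
  have h_ϑu : ∫ ω, w (B ω) * (A ω - (a * B ω + u)) * ϑu (V ω) ∂μ
      = (∫ ω, w (B ω) ∂μ) * covE μ (fun ω => ϑu (V ω)) (fun ω => αu (V ω)) := by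
    have hcov := hT.covE_comp_AB_comp_V hh hO.measurable_ϑu hO.bounded_ϑu
    have h_jump (b : ℝ) : w b * (1 - (a * b + u)) - w b * (0 - (a * b + u)) = w b := by ring
    simp only [h_jump, covE_comm μ (fun ω => ϑu (V ω)) (fun ω => αz (V ω)), hc.αz_ϑu,
      mul_zero, zero_add] at hcov
    rw [covE, hT.integral_comp_mul_residual_eq_zero hw, zero_mul, sub_zero] at hcov
    exact hcov
  have key := hO.integral_comp_AB_mul_Y hT hc hh
  dsimp only at key
  rw [h_resid Y, h_resid A, h_resid (fun ω => A ω * B ω), key, h_B, h_ϑu]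
  ring

lemma integral_centered_residual_mul_Y (hO : LinearOutcomeModel μ V A B Y ϑa ϑz ϑaz ϑu)
    (hT : IVTreatmentModel μ V A B αz αu) (hc : EffectsUncorrelated μ V ϑa ϑz ϑaz ϑu αz αu) :
    (∫ ω, (B ω - ∫ x, B x ∂μ)
        * (A ω - (μ[A | MeasurableSpace.comap B inferInstance]) ω) * A ω ∂μ)
        * ∫ ω, ϑa (V ω) ∂μ
      + (∫ ω, B ω * (B ω - ∫ x, B x ∂μ)
        * (A ω - (μ[A | MeasurableSpace.comap B inferInstance]) ω) * A ω ∂μ)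
        * ∫ ω, ϑaz (V ω) ∂μ
      = ∫ ω, (B ω - ∫ x, B x ∂μ)
        * (A ω - (μ[A | MeasurableSpace.comap B inferInstance]) ω) * Y ω ∂μ := by
  have key := hO.integral_comp_mul_residual_mul_Y hT hc (w := fun b => b - ∫ x, B x ∂μ)
    (by fun_prop)
  have h_centered : ∫ ω, (B ω - ∫ x, B x ∂μ) ∂μ = 0 := by
    simpa only [average_eq_integral] using integral_sub_average μ B
  rw [h_centered, zero_mul, add_zero] at key
  -- the integrands on the two sides agree up to the order of their factors
  simp only [mul_comm, mul_assoc, mul_left_comm] at key ⊢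
  linear_combination -key

lemma integral_centered_mul_Y (hO : LinearOutcomeModel μ V A B Y ϑa ϑz ϑaz ϑu)
    (hT : IVTreatmentModel μ V A B αz αu) (hc : EffectsUncorrelated μ V ϑa ϑz ϑaz ϑu αz αu) :
    (∫ ω, A ω * (B ω - ∫ x, B x ∂μ) ∂μ) * ∫ ω, ϑa (V ω) ∂μ
      + (∫ ω, B ω * (B ω - ∫ x, B x ∂μ) ∂μ) * ∫ ω, ϑz (V ω) ∂μ
      + (∫ ω, A ω * B ω * (B ω - ∫ x, B x ∂μ) ∂μ) * ∫ ω, ϑaz (V ω) ∂μ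
      = ∫ ω, (B ω - ∫ x, B x ∂μ) * Y ω ∂μ := by
  have key := hO.integral_comp_AB_mul_Y hT hc (h := fun p => p.2 - ∫ x, B x ∂μ) (by fun_prop)
  have h_centered : ∫ ω, (B ω - ∫ x, B x ∂μ) ∂μ = 0 := by
    simpa only [average_eq_integral] using integral_sub_average μ B
  dsimp only at key
  rw [hT.integral_comp_mul_comp (w := fun b => b - ∫ x, B x ∂μ) (by fun_prop)
    hO.measurable_ϑu, h_centered, zero_mul, add_zero] at key
  simp only [mul_comm, mul_assoc] at key ⊢
  linear_combination -key

lemma covE_residual_mul_Y (hO : LinearOutcomeModel μ V A B Y ϑa ϑz ϑaz ϑu)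
    (hT : IVTreatmentModel μ V A B αz αu) (hc : EffectsUncorrelated μ V ϑa ϑz ϑaz ϑu αz αu) :
    covE μ (fun ω => B ω * (B ω - ∫ x, B x ∂μ))
        (fun ω => A ω * (A ω - (μ[A | MeasurableSpace.comap B inferInstance]) ω))
        * ∫ ω, ϑa (V ω) ∂μ
      + covE μ (fun ω => B ω * (B ω - ∫ x, B x ∂μ))
        (fun ω => A ω * B ω * (A ω - (μ[A | MeasurableSpace.comap B inferInstance]) ω))
        * ∫ ω, ϑaz (V ω) ∂μ
      = covE μ (fun ω => B ω * (B ω - ∫ x, B x ∂μ))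
        (fun ω => (A ω - (μ[A | MeasurableSpace.comap B inferInstance]) ω) * Y ω) := by
  have key_W := hO.integral_comp_mul_residual_mul_Y hT hc
    (w := fun b => b * (b - ∫ x, B x ∂μ)) (by fun_prop)
  have key_1 := hO.integral_comp_mul_residual_mul_Y hT hc (w := fun _ => 1) measurable_const
  simp only [one_mul, integral_const, probReal_univ, smul_eq_mul] at key_1
  simp only [covE]
  simp only [mul_comm, mul_assoc, mul_left_comm] at key_W key_1 ⊢
  linear_combination (∫ ω, B ω * (B ω - ∫ x, B x ∂μ) ∂μ) * key_1 - key_W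

end LinearOutcomeModel
end Model

/-- Theorem 1 (nonparametric identification): the vector
`x* = (E[ϑ_a(V)], E[ϑ_z(V)], E[ϑ_az(V)])` satisfies the linear system `M·x = c` built from
the three identification equations (Lemmas 4–6); consequently, if `M` is invertible, every
solution of the system equals `x*`. -/
theorem theorem1_nonparametric_identification
    {Ω 𝒱 : Type*} [MeasurableSpace Ω] [MeasurableSpace 𝒱]
    (μ : Measure Ω) [IsProbabilityMeasure μ]
    (V : Ω → 𝒱) (A B : Ω → ℝ)
    (hV : Measurable V) (hA : Measurable A) (hB : Measurable B)
    (hA01 : ∀ ω, A ω = 0 ∨ A ω = 1) (hB01 : ∀ ω, B ω = 0 ∨ B ω = 1)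
    (αz αu : 𝒱 → ℝ) (hαzm : Measurable αz) (hαum : Measurable αu)
    (hαzb : ∃ C, ∀ x, |αz x| ≤ C) (hαub : ∃ C, ∀ x, |αu x| ≤ C)
    (htreat : μ[A | MeasurableSpace.comap (fun ω => (B ω, V ω)) inferInstance]
        =ᵐ[μ] fun ω => αz (V ω) * B ω + αu (V ω))
    (hindep : IndepFun B V μ)
    (Y : Ω → ℝ) (hY : Integrable Y μ)
    (ϑa ϑz ϑaz ϑu : 𝒱 → ℝ)
    (hϑam : Measurable ϑa) (hϑzm : Measurable ϑz)
    (hϑazm : Measurable ϑaz) (hϑum : Measurable ϑu)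
    (hϑab : ∃ C, ∀ x, |ϑa x| ≤ C) (hϑzb : ∃ C, ∀ x, |ϑz x| ≤ C)
    (hϑazb : ∃ C, ∀ x, |ϑaz x| ≤ C) (hϑub : ∃ C, ∀ x, |ϑu x| ≤ C)
    (houtcome : μ[Y | MeasurableSpace.comap (fun ω => (V ω, A ω, B ω)) inferInstance]
        =ᵐ[μ] fun ω => ϑa (V ω) * A ω + ϑz (V ω) * B ω + ϑaz (V ω) * A ω * B ω + ϑu (V ω))
    (horth1 : covE μ (fun x => ϑa (V x)) (fun x => αz (V x)) = 0)
    (horth2 : covE μ (fun x => ϑa (V x)) (fun x => αu (V x)) = 0)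
    (horth3 : covE μ (fun x => ϑz (V x)) (fun x => αz (V x)) = 0)
    (horth4 : covE μ (fun x => ϑz (V x)) (fun x => αu (V x)) = 0)
    (horth5 : covE μ (fun x => ϑaz (V x)) (fun x => αz (V x)) = 0)
    (horth6 : covE μ (fun x => ϑaz (V x)) (fun x => αu (V x)) = 0)
    (horth7 : covE μ (fun x => αz (V x)) (fun x => ϑu (V x)) = 0)
    (M : Matrix (Fin 3) (Fin 3) ℝ) (c : Fin 3 → ℝ)
    (hM : M =
      !![∫ ω, (B ω - ∫ x, B x ∂μ)
            * (A ω - (μ[A | MeasurableSpace.comap B inferInstance]) ω) * A ω ∂μ,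
         0,
         ∫ ω, B ω * (B ω - ∫ x, B x ∂μ)
            * (A ω - (μ[A | MeasurableSpace.comap B inferInstance]) ω) * A ω ∂μ;
         ∫ ω, A ω * (B ω - ∫ x, B x ∂μ) ∂μ,
         ∫ ω, B ω * (B ω - ∫ x, B x ∂μ) ∂μ,
         ∫ ω, A ω * B ω * (B ω - ∫ x, B x ∂μ) ∂μ;
         covE μ (fun ω => B ω * (B ω - ∫ x, B x ∂μ))
            (fun ω => A ω * (A ω - (μ[A | MeasurableSpace.comap B inferInstance]) ω)),
         0,
         covE μ (fun ω => B ω * (B ω - ∫ x, B x ∂μ))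
            (fun ω => A ω * B ω * (A ω - (μ[A | MeasurableSpace.comap B inferInstance]) ω))])
    (hc : c =
      ![∫ ω, (B ω - ∫ x, B x ∂μ)
            * (A ω - (μ[A | MeasurableSpace.comap B inferInstance]) ω) * Y ω ∂μ,
        ∫ ω, (B ω - ∫ x, B x ∂μ) * Y ω ∂μ,
        covE μ (fun ω => B ω * (B ω - ∫ x, B x ∂μ))
            (fun ω => (A ω - (μ[A | MeasurableSpace.comap B inferInstance]) ω) * Y ω)]) :
    M.mulVec ![∫ ω, ϑa (V ω) ∂μ, ∫ ω, ϑz (V ω) ∂μ, ∫ ω, ϑaz (V ω) ∂μ] = c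
    ∧ (IsUnit M → ∀ x : Fin 3 → ℝ, M.mulVec x = c →
        x = ![∫ ω, ϑa (V ω) ∂μ, ∫ ω, ϑz (V ω) ∂μ, ∫ ω, ϑaz (V ω) ∂μ]) := by
  have hT : IVTreatmentModel μ V A B αz αu :=
    ⟨hV, hA, hB, hA01, hB01, hαzm, hαum, hαzb, hαub, htreat, hindep⟩
  have hO : LinearOutcomeModel μ V A B Y ϑa ϑz ϑaz ϑu :=
    ⟨hY, hϑam, hϑzm, hϑazm, hϑum, hϑab, hϑzb, hϑazb, hϑub, houtcome⟩
  have hcov : EffectsUncorrelated μ V ϑa ϑz ϑaz ϑu αz αu :=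
    ⟨horth1, horth2, horth3, horth4, horth5, horth6, horth7⟩
  have hsolves : M.mulVec ![∫ ω, ϑa (V ω) ∂μ, ∫ ω, ϑz (V ω) ∂μ, ∫ ω, ϑaz (V ω) ∂μ] = c := by
    subst hM hc
    ext i
    fin_cases i
    · simpa [Matrix.mulVec, dotProduct, Fin.sum_univ_three]
        using hO.integral_centered_residual_mul_Y hT hcov
    · simpa [Matrix.mulVec, dotProduct, Fin.sum_univ_three] using hO.integral_centered_mul_Y hT hcov
    · simpa [Matrix.mulVec, dotProduct, Fin.sum_univ_three] using hO.covE_residual_mul_Y hT hcov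
  exact ⟨hsolves, fun hM_unit x hx =>
    Matrix.mulVec_injective_of_isUnit hM_unit (hx.trans hsolves.symm)⟩
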